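/- The sum of the sixth powers of the roots of the monic probabilists' Hermite polynomial H_n equals 5n^4 - 22n^3 + 32n^2 - 15n. -/

import Mathlib

open Polynomial

/-- The monic probabilists' Hermite polynomials. -/
noncomputable def hermiteP : ℕ → Polynomial ℝ
  | 0 => 1
  | 1 => X
  | (n + 2) => X * hermiteP (n + 1) - C ((n : ℝ) + 1) * hermiteP n

section Aux
open Multiset Filter

theorem hermiteP_succ_succ (n : ℕ) :
    hermiteP (n + 2) = X * hermiteP (n + 1) - C ((n : ℝ) + 1) * hermiteP n := rfl

theorem hermiteP_monic_deg : ∀ n, (hermiteP n).Monic ∧ (hermiteP n).natDegree = n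
  | 0 => ⟨monic_one, natDegree_one⟩
  | 1 => ⟨monic_X, natDegree_X⟩
  | (n + 2) => by
    obtain ⟨hm1, hd1⟩ := hermiteP_monic_deg (n + 1)
    obtain ⟨hm0, hd0⟩ := hermiteP_monic_deg n
    have hXm : (X * hermiteP (n + 1)).Monic := monic_X.mul hm1
    have hXd : (X * hermiteP (n + 1)).natDegree = n + 2 := by
      rw [natDegree_mul X_ne_zero hm1.ne_zero, natDegree_X, hd1]; omega
    have hCd : (C ((n : ℝ) + 1) * hermiteP n).natDegree < n + 2 := by
      have h := natDegree_mul_le (p := C ((n : ℝ) + 1)) (q := hermiteP n)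
      rw [natDegree_C, hd0] at h
      omega
    rw [hermiteP_succ_succ]
    constructor
    · rw [sub_eq_add_neg]
      refine hXm.add_of_left ?_
      rw [degree_neg, degree_eq_natDegree hXm.ne_zero, hXd]
      calc (C ((n : ℝ) + 1) * hermiteP n).degree ≤ (C ((n : ℝ) + 1) * hermiteP n).natDegree :=
            degree_le_natDegree
        _ < ((n + 2 : ℕ) : WithBot ℕ) := by exact_mod_cast hCd
    · rw [natDegree_sub_eq_left_of_natDegree_lt (by rw [hXd]; exact hCd), hXd]

theorem hermiteP_monic (n : ℕ) : (hermiteP n).Monic := (hermiteP_monic_deg n).1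
theorem hermiteP_natDegree (n : ℕ) : (hermiteP n).natDegree = n := (hermiteP_monic_deg n).2

theorem hermiteP_coeff_rec (n k : ℕ) :
    (hermiteP (n + 2)).coeff (k + 1)
      = (hermiteP (n + 1)).coeff k - ((n : ℝ) + 1) * (hermiteP n).coeff (k + 1) := by
  rw [hermiteP_succ_succ, coeff_sub, coeff_X_mul, coeff_C_mul]

theorem hermiteP_coeff_rec0 (n : ℕ) :
    (hermiteP (n + 2)).coeff 0 = -(((n : ℝ) + 1) * (hermiteP n).coeff 0) := by
  rw [hermiteP_succ_succ, coeff_sub, mul_coeff_zero, coeff_X_zero, zero_mul, coeff_C_mul, zero_sub]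

theorem hermiteP_coeff_top (n k : ℕ) (h : n < k) : (hermiteP n).coeff k = 0 :=
  coeff_eq_zero_of_natDegree_lt (by rw [hermiteP_natDegree]; exact h)

theorem B1 : ∀ m, (hermiteP (m + 1)).coeff m = 0 := by
  intro m
  induction m with
  | zero => show (X : Polynomial ℝ).coeff 0 = 0; simp
  | succ m ih =>
    rw [show m + 1 + 1 = m + 2 from rfl, hermiteP_coeff_rec m m, ih,
      hermiteP_coeff_top m (m+1) (by omega)]
    ring

theorem B2 : ∀ m, (hermiteP (m + 2)).coeff m = -(((m:ℝ)+1) * ((m:ℝ)+2)) / 2 := by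
  intro m
  induction m with
  | zero =>
    rw [show (0:ℕ) + 2 = 0 + 2 from rfl, hermiteP_coeff_rec0 0]
    have h0 : hermiteP 0 = 1 := rfl
    rw [h0]; norm_num
  | succ m ih =>
    rw [show m + 1 + 2 = (m + 1) + 2 from rfl, hermiteP_coeff_rec (m+1) m, ih]
    have hl : (hermiteP (m+1)).coeff (m+1) = 1 := by
      have := (hermiteP_monic (m+1)).coeff_natDegree
      rwa [hermiteP_natDegree] at this
    rw [hl]
    push_cast; ring

theorem B3 : ∀ m, (hermiteP (m + 3)).coeff m = 0 := by
  intro m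
  induction m with
  | zero =>
    rw [show (0:ℕ) + 3 = 1 + 2 from rfl, hermiteP_coeff_rec0 1]
    have h1 : hermiteP 1 = X := rfl
    rw [h1]; simp
  | succ m ih =>
    rw [show m + 1 + 3 = (m + 2) + 2 from rfl, hermiteP_coeff_rec (m+2) m, ih, show (hermiteP (m+2)).coeff (m+1) = 0 from B1 (m+1)]
    ring

theorem B4 : ∀ m, (hermiteP (m + 4)).coeff m
    = ((m:ℝ)+1) * ((m:ℝ)+2) * ((m:ℝ)+3) * ((m:ℝ)+4) / 8 := by
  intro m
  induction m with
  | zero =>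
    rw [show (0:ℕ) + 4 = 2 + 2 from rfl, hermiteP_coeff_rec0 2, B2 0]
    norm_num
  | succ m ih =>
    rw [show m + 1 + 4 = (m + 3) + 2 from rfl, hermiteP_coeff_rec (m+3) m, ih, show (hermiteP (m+3)).coeff (m+1) = _ from B2 (m+1)]
    push_cast; ring

theorem B5 : ∀ m, (hermiteP (m + 5)).coeff m = 0 := by
  intro m
  induction m with
  | zero =>
    rw [show (0:ℕ) + 5 = 3 + 2 from rfl, hermiteP_coeff_rec0 3, B3 0]
    simp
  | succ m ih =>
    rw [show m + 1 + 5 = (m + 4) + 2 from rfl, hermiteP_coeff_rec (m+4) m, ih, show (hermiteP (m+4)).coeff (m+1) = 0 from B3 (m+1)]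
    ring

theorem B6 : ∀ m, (hermiteP (m + 6)).coeff m
    = -(((m:ℝ)+1) * ((m:ℝ)+2) * ((m:ℝ)+3) * ((m:ℝ)+4) * ((m:ℝ)+5) * ((m:ℝ)+6)) / 48 := by
  intro m
  induction m with
  | zero =>
    rw [show (0:ℕ) + 6 = 4 + 2 from rfl, hermiteP_coeff_rec0 4, B4 0]
    norm_num
  | succ m ih =>
    rw [show m + 1 + 6 = (m + 5) + 2 from rfl, hermiteP_coeff_rec (m+5) m, ih, show (hermiteP (m+5)).coeff (m+1) = _ from B4 (m+1)]
    push_cast; ring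

open Multiset Filter

theorem esymm_cons (a : ℝ) (s : Multiset ℝ) (k : ℕ) :
    (a ::ₘ s).esymm (k+1) = s.esymm (k+1) + a * s.esymm k := by
  rw [Multiset.esymm, Multiset.powersetCard_cons, Multiset.map_add, Multiset.sum_add,
    Multiset.map_map]
  rw [Multiset.esymm, Multiset.esymm]
  congr 1
  rw [show Multiset.map (prod ∘ cons a) (powersetCard k s)
      = Multiset.map (fun t => a * t.prod) (powersetCard k s) from
    Multiset.map_congr rfl fun t _ => by simp [Multiset.prod_cons]]
  rw [← Multiset.sum_map_mul_left]

def psum (s : Multiset ℝ) (k : ℕ) : ℝ := (Multiset.map (fun x => x ^ k) s).sum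

theorem newton6 (s : Multiset ℝ) :
    psum s 1 = s.esymm 1 ∧
    psum s 2 = s.esymm 1 * psum s 1 - 2 * s.esymm 2 ∧
    psum s 3 = s.esymm 1 * psum s 2 - s.esymm 2 * psum s 1 + 3 * s.esymm 3 ∧
    psum s 4 = s.esymm 1 * psum s 3 - s.esymm 2 * psum s 2 + s.esymm 3 * psum s 1
      - 4 * s.esymm 4 ∧
    psum s 5 = s.esymm 1 * psum s 4 - s.esymm 2 * psum s 3 + s.esymm 3 * psum s 2
      - s.esymm 4 * psum s 1 + 5 * s.esymm 5 ∧
    psum s 6 = s.esymm 1 * psum s 5 - s.esymm 2 * psum s 4 + s.esymm 3 * psum s 3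
      - s.esymm 4 * psum s 2 + s.esymm 5 * psum s 1 - 6 * s.esymm 6 := by
  induction s using Multiset.induction_on with
  | empty => simp [Multiset.esymm, psum, Multiset.powersetCard_eq_empty (s := (0 : Multiset ℝ)) 1 (by simp),
    Multiset.powersetCard_eq_empty (s := (0 : Multiset ℝ)) 2 (by simp),
    Multiset.powersetCard_eq_empty (s := (0 : Multiset ℝ)) 3 (by simp),
    Multiset.powersetCard_eq_empty (s := (0 : Multiset ℝ)) 4 (by simp),
    Multiset.powersetCard_eq_empty (s := (0 : Multiset ℝ)) 5 (by simp),
    Multiset.powersetCard_eq_empty (s := (0 : Multiset ℝ)) 6 (by simp)]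
  | cons a s ih =>
    obtain ⟨h1, h2, h3, h4, h5, h6⟩ := ih
    have e0 : s.esymm 0 = 1 := by simp [Multiset.esymm]
    have hp : ∀ k, psum (a ::ₘ s) k = a ^ k + psum s k := fun k => by
      simp [psum, Multiset.map_cons, Multiset.sum_cons]
    have ec1 : (a ::ₘ s).esymm 1 = s.esymm 1 + a * s.esymm 0 := esymm_cons a s 0
    have ec2 : (a ::ₘ s).esymm 2 = s.esymm 2 + a * s.esymm 1 := esymm_cons a s 1
    have ec3 : (a ::ₘ s).esymm 3 = s.esymm 3 + a * s.esymm 2 := esymm_cons a s 2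
    have ec4 : (a ::ₘ s).esymm 4 = s.esymm 4 + a * s.esymm 3 := esymm_cons a s 3
    have ec5 : (a ::ₘ s).esymm 5 = s.esymm 5 + a * s.esymm 4 := esymm_cons a s 4
    have ec6 : (a ::ₘ s).esymm 6 = s.esymm 6 + a * s.esymm 5 := esymm_cons a s 5
    simp only [hp, ec1, ec2, ec3, ec4, ec5, ec6, e0]
    refine ⟨by linear_combination h1, by linear_combination h2 - a*h1, ?_, ?_, ?_, ?_⟩
    · linear_combination h3 - a*h2
    · linear_combination h4 - a*h3
    · linear_combination h5 - a*h4
    · linear_combination h6 - a*h5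

theorem neg_one_pow_par (a b : ℕ) (h : a % 2 = b % 2) : (-1:ℝ)^a = (-1)^b := by
  conv_lhs => rw [← Nat.div_add_mod a 2]
  conv_rhs => rw [← Nat.div_add_mod b 2]
  rw [pow_add, pow_add, pow_mul, pow_mul, h]
  norm_num

theorem exists_root_between {f : Polynomial ℝ} {a b : ℝ} (hab : a < b)
    (h : eval a f * eval b f < 0) : ∃ c, c ∈ Set.Ioo a b ∧ eval c f = 0 := by
  rcases lt_or_ge (eval a f) 0 with ha | ha
  · have hb : 0 < eval b f := by nlinarith
    obtain ⟨c, hc, hc0⟩ := intermediate_value_Ioo hab.le f.continuousOn ⟨ha, hb⟩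
    exact ⟨c, hc, hc0⟩
  · have ha' : 0 < eval a f := by
      rcases ha.lt_or_eq with h' | h'
      · exact h'
      · rw [← h'] at h; nlinarith
    have hb : eval b f < 0 := by nlinarith
    obtain ⟨c, hc, hc0⟩ := intermediate_value_Ioo' hab.le f.continuousOn ⟨hb, ha'⟩
    exact ⟨c, hc, hc0⟩

theorem prod_neg_sign (s : Finset ℕ) (f : ℕ → ℝ) (h : ∀ i ∈ s, f i < 0) :
    0 < (-1:ℝ)^s.card * ∏ i ∈ s, f i := by
  induction s using Finset.induction_on with
  | empty => simp
  | @insert x s' hx ih =>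
    rw [Finset.prod_insert hx, Finset.card_insert_of_notMem hx, pow_succ]
    have h1 := ih (fun i hi => h i (Finset.mem_insert_of_mem hi))
    have h2 := h x (Finset.mem_insert_self x s')
    nlinarith

theorem hermiteP_roots_aux : ∀ n : ℕ, ∃ r : ℕ → ℝ,
    (∀ i j, i < j → j < n → r i < r j) ∧
    (∀ i, i < n → (hermiteP n).eval (r i) = 0) ∧
    (∀ i, i < n → 0 < (-1:ℝ)^(n + i) * (hermiteP (n+1)).eval (r i)) := by
  intro n
  induction n with
  | zero => exact ⟨fun _ => 0, by omega, by omega, by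
      intro i hi; exact absurd hi (by omega)⟩
  | succ n ih =>
    obtain ⟨r, hmono, hroot, hsgn⟩ := ih
    -- the polynomial hermiteP n factors completely
    have hne : hermiteP n ≠ 0 := (hermiteP_monic n).ne_zero
    set Z : Finset ℝ := (Finset.range n).image r with hZ
    have hinj : Set.InjOn r (Finset.range n) := by
      intro i hi j hj hij
      simp only [Finset.coe_range, Set.mem_Iio] at hi hj
      rcases lt_trichotomy i j with h | h | h
      · exact absurd hij (ne_of_lt (hmono i j h hj))
      · exact h
      · exact absurd hij.symm (ne_of_lt (hmono j i h hi))
    have hZcard : Z.card = n := by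
      rw [hZ, Finset.card_image_of_injOn hinj, Finset.card_range]
    have hZsub : Z.val ⊆ (hermiteP n).roots := by
      intro x hx
      rw [Finset.mem_val, hZ, Finset.mem_image] at hx
      obtain ⟨i, hi, rfl⟩ := hx
      rw [mem_roots hne]
      exact hroot i (Finset.mem_range.mp hi)
    have hrootscard : Multiset.card (hermiteP n).roots = n := by
      refine le_antisymm ?_ ?_
      · have := (hermiteP n).card_roots'
        rwa [hermiteP_natDegree] at this
      · have := Multiset.card_le_card (Finset.val_le_iff_val_subset.2 hZsub)
        rwa [show Multiset.card Z.val = Z.card from rfl, hZcard] at this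
    have hrootseq : (hermiteP n).roots = Z.val := by
      refine (Multiset.eq_of_le_of_card_le (Finset.val_le_iff_val_subset.2 hZsub) ?_).symm
      rw [hrootscard, show Multiset.card Z.val = Z.card from rfl, hZcard]
    have heval : ∀ x : ℝ, (hermiteP n).eval x = ∏ i ∈ Finset.range n, (x - r i) := by
      intro x
      conv_lhs => rw [← prod_multiset_X_sub_C_of_monic_of_roots_card_eq (hermiteP_monic n)
        (by rw [hrootscard, hermiteP_natDegree])]
      rw [hrootseq, eval_multiset_prod, Multiset.map_map]
      have h1 : Z.val.map (eval x ∘ fun a => X - C a) = Z.val.map (fun a => x - a) := by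
        apply Multiset.map_congr rfl; intro a _; simp
      rw [h1, ← Finset.prod_eq_multiset_prod, hZ,
        Finset.prod_image (fun a ha b hb h => hinj ha hb h)]
    -- sign of hermiteP n at a point separating roots
    have hsign : ∀ (x : ℝ) (j : ℕ), j ≤ n → (∀ i, i < j → r i < x) →
        (∀ i, j ≤ i → i < n → x < r i) → 0 < (-1:ℝ)^(n+j) * (hermiteP n).eval x := by
      intro x j hj hlt hgt
      rw [heval, Finset.range_eq_Ico, ← Finset.prod_Ico_consecutive _ (Nat.zero_le j) hj]
      have hA : 0 < ∏ i ∈ Finset.Ico 0 j, (x - r i) := by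
        apply Finset.prod_pos
        intro i hi
        have := hlt i (Finset.mem_Ico.mp hi).2
        linarith
      have hB := prod_neg_sign (Finset.Ico j n) (fun i => x - r i) (by
        intro i hi
        have h1 := (Finset.mem_Ico.mp hi).1
        have h2 := (Finset.mem_Ico.mp hi).2
        have := hgt i h1 h2
        show x - r i < 0
        linarith)
      rw [Nat.card_Ico] at hB
      rw [neg_one_pow_par (n+j) (n-j) (by omega)]
      calc (0:ℝ) < (∏ i ∈ Finset.Ico 0 j, (x - r i)) * ((-1)^(n-j) * ∏ i ∈ Finset.Ico j n, (x - r i)) :=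
            mul_pos hA hB
        _ = (-1)^(n-j) * ((∏ i ∈ Finset.Ico 0 j, (x - r i)) * ∏ i ∈ Finset.Ico j n, (x - r i)) := by
            ring
    -- degree facts for hermiteP (n+1)
    have hne1 : hermiteP (n+1) ≠ 0 := (hermiteP_monic (n+1)).ne_zero
    have hdeg1 : 0 < (hermiteP (n+1)).degree := by
      rw [degree_eq_natDegree hne1, hermiteP_natDegree]
      exact_mod_cast Nat.succ_pos n
    -- b : above all roots, eval positive
    have htop := Polynomial.tendsto_atTop_of_leadingCoeff_nonneg (hermiteP (n+1)) hdeg1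
      (by rw [Monic.leadingCoeff (hermiteP_monic (n+1))]; norm_num)
    obtain ⟨b, hb0, hbr⟩ := ((htop.eventually_gt_atTop 0).and
      ((Finset.range n).eventually_all.2 (fun i _ => eventually_gt_atTop (r i)))).exists
    -- a : below all roots, sign (-1)^(n+1)
    have hQ : ∀ x : ℝ, (C ((-1:ℝ)^(n+1)) * ((hermiteP (n+1)).comp (-X))).eval x
        = (-1:ℝ)^(n+1) * (hermiteP (n+1)).eval (-x) := by
      intro x; simp [eval_comp]
    have hQdegnat : (C ((-1:ℝ)^(n+1)) * ((hermiteP (n+1)).comp (-X))).natDegree = n + 1 := by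
      rw [natDegree_C_mul (pow_ne_zero _ (by norm_num : (-1:ℝ) ≠ 0)), natDegree_comp, hermiteP_natDegree]
      simp
    have hQne : (C ((-1:ℝ)^(n+1)) * ((hermiteP (n+1)).comp (-X))) ≠ 0 := by
      intro h
      rw [h] at hQdegnat
      simp at hQdegnat
    have hQdeg : 0 < (C ((-1:ℝ)^(n+1)) * ((hermiteP (n+1)).comp (-X))).degree := by
      rw [degree_eq_natDegree hQne, hQdegnat]
      exact_mod_cast Nat.succ_pos n
    have hQlc : 0 ≤ (C ((-1:ℝ)^(n+1)) * ((hermiteP (n+1)).comp (-X))).leadingCoeff := by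
      rw [leadingCoeff_mul, leadingCoeff_C, leadingCoeff_comp (by simp),
        Monic.leadingCoeff (hermiteP_monic (n+1)), hermiteP_natDegree, one_mul,
        leadingCoeff_neg, leadingCoeff_X, ← pow_add, Even.neg_one_pow ⟨n+1, rfl⟩]
      norm_num
    have htop2 := Polynomial.tendsto_atTop_of_leadingCoeff_nonneg _ hQdeg hQlc
    obtain ⟨a0, ha0, ha0r, ha0b⟩ := ((htop2.eventually_gt_atTop 0).and
      (((Finset.range n).eventually_all.2 (fun i _ => eventually_gt_atTop (- r i))).and
        (eventually_gt_atTop (-b)))).exists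
    rw [hQ] at ha0
    set a : ℝ := -a0 with ha
    have haR : ∀ i, i < n → a < r i := by
      intro i hi
      have := ha0r i (Finset.mem_range.mpr hi)
      rw [ha]; linarith
    have hab : a < b := by rw [ha]; linarith
    have haS : 0 < (-1:ℝ)^(n+1) * (hermiteP (n+1)).eval a := by rw [ha]; exact ha0
    -- the separating sequence t
    set t : ℕ → ℝ := fun k => if k = 0 then a else if k ≤ n then r (k-1) else b with hT
    have ht0 : t 0 = a := rfl
    have htmid : ∀ k, 1 ≤ k → k ≤ n → t k = r (k-1) := by
      intro k h1 h2
      rw [hT]; simp only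
      rw [if_neg (by omega), if_pos h2]
    have httop : t (n+1) = b := by
      rw [hT]; simp only
      rw [if_neg (by omega), if_neg (by omega)]
    have htstep : ∀ k, k ≤ n → t k < t (k+1) := by
      intro k hk
      rcases Nat.eq_zero_or_pos k with rfl | hkpos
      · rcases Nat.eq_zero_or_pos n with rfl | hnpos
        · rw [ht0, show (0:ℕ)+1 = 0+1 from rfl, httop]; exact hab
        · rw [ht0, htmid 1 le_rfl hnpos]
          exact haR 0 hnpos
      · rcases Nat.lt_or_ge k n with hkn | hkn
        · rw [htmid k hkpos hk, htmid (k+1) (by omega) (by omega)]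
          exact hmono (k-1) k (by omega) hkn
        · have hkeq : k = n := by omega
          subst hkeq
          rw [htmid k hkpos le_rfl, httop]
          have := hbr (k-1) (Finset.mem_range.mpr (by omega))
          exact this
    have htlt : ∀ k l, k < l → l ≤ n + 1 → t k < t l := by
      intro k l hkl hl
      induction l with
      | zero => omega
      | succ l ihl =>
        rcases Nat.lt_or_ge k l with h | h
        · exact lt_trans (ihl h (by omega)) (htstep l (by omega))
        · have : k = l := by omega
          subst this
          exact htstep k (by omega)
    have htsgn : ∀ k, k ≤ n + 1 → 0 < (-1:ℝ)^(n+1+k) * (hermiteP (n+1)).eval (t k) := by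
      intro k hk
      rcases Nat.eq_zero_or_pos k with rfl | hkpos
      · rw [ht0, Nat.add_zero]; exact haS
      · rcases Nat.lt_or_ge k (n+1) with hkn | hkn
        · rw [htmid k hkpos (by omega), neg_one_pow_par (n+1+k) (n+(k-1)) (by omega)]
          exact hsgn (k-1) (by omega)
        · have : k = n + 1 := by omega
          subst this
          rw [httop, neg_one_pow_par (n+1+(n+1)) 0 (by omega), pow_zero, one_mul]
          exact hb0
    -- roots of hermiteP (n+1) between consecutive t's
    have hex : ∀ j : ℕ, ∃ c : ℝ, j ≤ n → c ∈ Set.Ioo (t j) (t (j+1)) ∧ (hermiteP (n+1)).eval c = 0 := by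
      intro j
      rcases Nat.lt_or_ge n j with h | h
      · exact ⟨0, by omega⟩
      · have h1 := htsgn j (by omega)
        have h2 := htsgn (j+1) (by omega)
        rw [show n+1+(j+1) = (n+1+j)+1 from rfl, pow_succ] at h2
        have hprod : (hermiteP (n+1)).eval (t j) * (hermiteP (n+1)).eval (t (j+1)) < 0 := by
          rcases neg_one_pow_eq_one_iff_even (R := ℝ) (by norm_num) (n := n+1+j) |>.mpr.mt with _
          rcases Nat.even_or_odd (n+1+j) with he | ho
          · rw [he.neg_one_pow] at h1 h2
            nlinarith
          · rw [ho.neg_one_pow] at h1 h2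
            nlinarith
        obtain ⟨c, hc1, hc2⟩ := exists_root_between (htstep j h) hprod
        exact ⟨c, fun _ => ⟨hc1, hc2⟩⟩
    choose s hs using hex
    refine ⟨s, ?_, ?_, ?_⟩
    · -- strict mono
      intro i j hij hjn
      have hi := (hs i (by omega)).1
      have hj := (hs j (by omega)).1
      have h1 : s i < t (i+1) := hi.2
      have h2 : t j < s j := hj.1
      rcases Nat.lt_or_ge (i+1) j with h | h
      · exact lt_trans h1 (lt_trans (htlt (i+1) j h (by omega)) h2)
      · have : i + 1 = j := by omega
        subst this
        exact lt_trans h1 h2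
    · intro i hi
      exact (hs i (by omega)).2
    · -- sign of hermiteP (n+2) at s j
      intro j hj
      have hj' : j ≤ n := by omega
      have hroot1 : (hermiteP (n+1)).eval (s j) = 0 := (hs j hj').2
      have hIoo := (hs j hj').1
      have hev2 : (hermiteP (n+2)).eval (s j) = -(((n:ℝ)+1) * (hermiteP n).eval (s j)) := by
        rw [hermiteP_succ_succ, eval_sub, eval_mul, eval_mul, eval_X, eval_C, hroot1]
        ring
      have hsgnn : 0 < (-1:ℝ)^(n+j) * (hermiteP n).eval (s j) := by
        apply hsign (s j) j hj'
        · intro i hilt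
          have h2 : t (i+1) ≤ t j := by
            rcases Nat.lt_or_ge (i+1) j with h | h
            · exact le_of_lt (htlt (i+1) j h (by omega))
            · have : i + 1 = j := by omega
              rw [this]
          have h1 : t (i+1) = r i := by
            rw [htmid (i+1) (by omega) (by omega), Nat.add_sub_cancel]
          rw [← h1]
          exact lt_of_le_of_lt h2 hIoo.1
        · intro i hge hilt
          calc s j < t (j+1) := hIoo.2
            _ ≤ t (i+1) := by
              rcases Nat.lt_or_ge (j+1) (i+1) with h | h
              · exact le_of_lt (htlt (j+1) (i+1) h (by omega))
              · have : j + 1 = i + 1 := by omega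
                rw [this]
            _ = r i := by rw [htmid (i+1) (by omega) (by omega), Nat.add_sub_cancel]
      rw [show (n:ℕ)+1+1 = n+2 from rfl, hev2,
        neg_one_pow_par (n+1+j) ((n+j)+1) (by omega), pow_succ]
      have hc : (0:ℝ) < (n:ℝ) + 1 := by positivity
      nlinarith

theorem hermiteP_roots_card (n : ℕ) : Multiset.card (hermiteP n).roots = n := by
  obtain ⟨r, hmono, hroot, -⟩ := hermiteP_roots_aux n
  have hne : hermiteP n ≠ 0 := (hermiteP_monic n).ne_zero
  have hinj : Set.InjOn r (Finset.range n) := by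
    intro i hi j hj hij
    simp only [Finset.coe_range, Set.mem_Iio] at hi hj
    rcases lt_trichotomy i j with h | h | h
    · exact absurd hij (ne_of_lt (hmono i j h hj))
    · exact h
    · exact absurd hij.symm (ne_of_lt (hmono j i h hi))
  have hZsub : ((Finset.range n).image r).val ⊆ (hermiteP n).roots := by
    intro y hy
    rw [Finset.mem_val, Finset.mem_image] at hy
    obtain ⟨i, hi, rfl⟩ := hy
    rw [mem_roots hne]
    exact hroot i (Finset.mem_range.mp hi)
  refine le_antisymm ?_ ?_
  · have := (hermiteP n).card_roots'
    rwa [hermiteP_natDegree] at this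
  · have := Multiset.card_le_card (Finset.val_le_iff_val_subset.2 hZsub)
    rwa [show Multiset.card ((Finset.range n).image r).val = ((Finset.range n).image r).card
      from rfl, Finset.card_image_of_injOn hinj, Finset.card_range] at this

theorem esymm_zero_of_lt (s : Multiset ℝ) (j : ℕ) (h : Multiset.card s < j) : s.esymm j = 0 := by
  simp [Multiset.esymm, Multiset.powersetCard_eq_empty _ h]


end Aux

/-- The sum of the sixth powers of the roots of `H n` equals `5n⁴ - 22n³ + 32n² - 15n`. -/
theorem hermite_powerSum_six (n : ℕ) :
    (((hermiteP n).roots).map (fun x => x ^ 6)).sum =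
      5 * (n : ℝ) ^ 4 - 22 * (n : ℝ) ^ 3 + 32 * (n : ℝ) ^ 2 - 15 * n := by
  have hcard : Multiset.card (hermiteP n).roots = n := hermiteP_roots_card n
  set s := (hermiteP n).roots with hsdef
  set x : ℝ := (n : ℝ) with hx
  have hV : ∀ j, j ≤ n → s.esymm j = (-1:ℝ)^j * (hermiteP n).coeff (n-j) := by
    intro j hj
    have h := coeff_eq_esymm_roots_of_card
      (p := hermiteP n) (by rw [hermiteP_natDegree]; exact hcard)
      (k := n - j) (by rw [hermiteP_natDegree]; omega)
    rw [(hermiteP_monic n).leadingCoeff, one_mul, hermiteP_natDegree,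
      show n - (n-j) = j from by omega] at h
    rw [h, ← mul_assoc, ← pow_add, Even.neg_one_pow ⟨j, (two_mul j).symm ▸ by omega⟩, one_mul]
  have he1 : s.esymm 1 = 0 := by
    rcases Nat.lt_or_ge n 1 with h | h
    · exact esymm_zero_of_lt s 1 (by omega)
    · have hB := B1 (n-1)
      rw [show n - 1 + 1 = n from by omega] at hB
      rw [hV 1 h, hB, mul_zero]
  have he3 : s.esymm 3 = 0 := by
    rcases Nat.lt_or_ge n 3 with h | h
    · exact esymm_zero_of_lt s 3 (by omega)
    · have hB := B3 (n-3)
      rw [show n - 3 + 3 = n from by omega] at hB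
      rw [hV 3 h, hB, mul_zero]
  have he5 : s.esymm 5 = 0 := by
    rcases Nat.lt_or_ge n 5 with h | h
    · exact esymm_zero_of_lt s 5 (by omega)
    · have hB := B5 (n-5)
      rw [show n - 5 + 5 = n from by omega] at hB
      rw [hV 5 h, hB, mul_zero]
  have he2 : s.esymm 2 = -(x * (x - 1)) / 2 := by
    rcases Nat.lt_or_ge n 2 with h | h
    · rw [esymm_zero_of_lt s 2 (by omega), hx]
      interval_cases n <;> norm_num
    · have hB := B2 (n-2)
      rw [show n - 2 + 2 = n from by omega] at hB
      rw [hV 2 h, hB, hx, Nat.cast_sub (by omega : 2 ≤ n)]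
      push_cast
      ring
  have he4 : s.esymm 4 = x * (x - 1) * (x - 2) * (x - 3) / 8 := by
    rcases Nat.lt_or_ge n 4 with h | h
    · rw [esymm_zero_of_lt s 4 (by omega), hx]
      interval_cases n <;> norm_num
    · have hB := B4 (n-4)
      rw [show n - 4 + 4 = n from by omega] at hB
      rw [hV 4 h, hB, hx, Nat.cast_sub (by omega : 4 ≤ n)]
      push_cast
      ring
  have he6 : s.esymm 6 = -(x * (x - 1) * (x - 2) * (x - 3) * (x - 4) * (x - 5)) / 48 := by
    rcases Nat.lt_or_ge n 6 with h | h
    · rw [esymm_zero_of_lt s 6 (by omega), hx]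
      interval_cases n <;> norm_num
    · have hB := B6 (n-6)
      rw [show n - 6 + 6 = n from by omega] at hB
      rw [hV 6 h, hB, hx, Nat.cast_sub (by omega : 6 ≤ n)]
      push_cast
      ring
  obtain ⟨h1, h2, h3, h4, h5, h6⟩ := newton6 s
  have hp1 : psum s 1 = 0 := by rw [h1, he1]
  have hp2 : psum s 2 = x ^ 2 - x := by rw [h2, he1, he2, hp1]; ring
  have hp3 : psum s 3 = 0 := by rw [h3, he1, he2, he3, hp1, hp2]; ring
  have hp4 : psum s 4 = x * (x - 1) * (2 * x - 3) := by
    rw [h4, he1, he2, he3, he4, hp1, hp2, hp3]; ring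
  have hp5 : psum s 5 = 0 := by rw [h5, he1, he2, he3, he4, he5, hp1, hp2, hp3, hp4]; ring
  have hp6 : psum s 6 = 5 * x ^ 4 - 22 * x ^ 3 + 32 * x ^ 2 - 15 * x := by
    rw [h6, he1, he2, he3, he4, he5, he6, hp1, hp2, hp3, hp4, hp5]; ring
  exact hp6
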